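/- If (C_i)_{i∈I} is a κ-small family of κ-accessible categories, then the product category ∏_{i∈I} C_i is κ-accessible, and each projection functor is strongly κ-accessible (it preserves small κ-filtered colimits and sends κ-presentable objects to κ-presentable objects). -/

import Mathlib

universe v u u₂

open CategoryTheory Limits Opposite

noncomputable section

/-- A small category with fewer than `κ` morphisms. -/
def CardSmallCat (K : Type v) [SmallCategory K] (κ : Cardinal.{v}) : Prop :=
  Cardinal.mk (Σ p : K × K, p.1 ⟶ p.2) < κ

/-- `J` is `κ`-filtered: every `κ`-small diagram in `J` admits a cocone. -/
def IsCardFiltered (J : Type v) [SmallCategory J] (κ : Cardinal.{v}) : Prop :=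
  ∀ (K : Type v) [SmallCategory K], CardSmallCat K κ → ∀ F : K ⥤ J, Nonempty (Cocone F)

/-- `A` is `κ`-presentable: `Hom(A,-)` preserves colimits of small `κ`-filtered diagrams. -/
def IsCardPresentable {C : Type u} [Category.{v} C] (κ : Cardinal.{v}) (A : C) : Prop :=
  ∀ (J : Type v) [SmallCategory J], IsCardFiltered J κ →
    Nonempty (PreservesColimitsOfShape J (coyoneda.obj (op A)))

/-- `A` is `(κ, lam)`-presentable: `Hom(A,-)` preserves colimits of `lam`-small
`κ`-filtered diagrams. -/
def IsRelPresentable {C : Type u} [Category.{v} C] (κ lam : Cardinal.{v}) (A : C) : Prop :=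
  ∀ (J : Type v) [SmallCategory J], CardSmallCat J lam → IsCardFiltered J κ →
    Nonempty (PreservesColimitsOfShape J (coyoneda.obj (op A)))

/-- `C` is a `κ`-accessible category. -/
def IsCardAccessible (C : Type u) [Category.{v} C] (κ : Cardinal.{v}) : Prop :=
  (∀ (J : Type v) [SmallCategory J], IsCardFiltered J κ → HasColimitsOfShape J C) ∧
  ∃ G : Set C, Small.{v} G ∧ (∀ A ∈ G, IsCardPresentable κ A) ∧
    ∀ X : C, ∃ (J : Type v) (inst : SmallCategory J) (F : J ⥤ C) (c : Cocone F),
      IsCardFiltered J κ ∧ (∀ j, F.obj j ∈ G) ∧ Nonempty (IsColimit c) ∧ Nonempty (c.pt ≅ X)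

/-- `F` preserves colimits of small `κ`-filtered diagrams. -/
def PreservesCardFiltered {C : Type u} [Category.{v} C] {D : Type u₂} [Category.{v} D]
    (F : C ⥤ D) (κ : Cardinal.{v}) : Prop :=
  ∀ (J : Type v) [SmallCategory J], IsCardFiltered J κ →
    Nonempty (PreservesColimitsOfShape J F)

/-- `F` is a strongly `κ`-accessible functor. -/
def StronglyCardAccessible {C : Type u} [Category.{v} C] {D : Type u₂} [Category.{v} D]
    (F : C ⥤ D) (κ : Cardinal.{v}) : Prop :=
  IsCardAccessible C κ ∧ IsCardAccessible D κ ∧ PreservesCardFiltered F κ ∧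
    ∀ X : C, IsCardPresentable κ X → IsCardPresentable κ (F.obj X)

/-- `κ ◁ lam`: `κ` is sharply less than `lam`. -/
def SharplyLess (κ lam : Cardinal.{u}) : Prop :=
  κ < lam ∧ ∀ X : Type u, Cardinal.mk X < lam →
    ∃ S : Set {s : Set X // Cardinal.mk s < κ},
      Cardinal.mk S < lam ∧ ∀ t : {s : Set X // Cardinal.mk s < κ}, ∃ w ∈ S, t.1 ⊆ w.1

/-! Colimits in `∀ i, C i` are computed componentwise, so the projections preserve them.
`Hom(X, -)` on the product is the `κ`-small product of the functors `Hom(X i, (-) i)`, and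
`κ`-small limits commute with `κ`-filtered colimits of types, so a product of `κ`-presentable
objects is `κ`-presentable. Conversely `X i` inherits `κ`-presentability from `X`: a
`κ`-filtered diagram in `C i` extends to the product by constant diagrams, which are colimits
since `κ`-filtered categories are connected. Finally, presenting every `X i` as a `κ`-filtered
colimit of generators `F i : J i ⥤ C i`, the product diagram on `∀ i, J i` is again
`κ`-filtered and has colimit `X`, because the projections `∀ i, J i ⥤ J i` are final. -/

lemma cardSmallCat_iff_hasCardinalLT_arrow (K : Type v) [SmallCategory K] (κ : Cardinal.{v}) :
    CardSmallCat K κ ↔ HasCardinalLT (Arrow K) κ := by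
  let e : Arrow K ≃ Σ p : K × K, p.1 ⟶ p.2 :=
    { toFun f := ⟨(f.left, f.right), f.hom⟩
      invFun x := Arrow.mk x.2
      left_inv _ := rfl
      right_inv _ := rfl }
  rw [CardSmallCat, hasCardinalLT_iff_cardinal_mk_lt, Cardinal.mk_congr e]

section

variable {κ : Cardinal.{v}} [Fact κ.IsRegular]

lemma isCardFiltered_iff (J : Type v) [SmallCategory J] :
    IsCardFiltered J κ ↔ IsCardinalFiltered J κ := by
  simp only [IsCardFiltered, cardSmallCat_iff_hasCardinalLT_arrow]
  exact ⟨fun h => ⟨fun F hA => h _ hA F⟩, fun h K _ hK F => h.nonempty_cocone F hK⟩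

lemma isCardPresentable_iff {C : Type u} [Category.{v} C] (A : C) :
    IsCardPresentable κ A ↔ IsCardinalPresentable A κ := by
  simp only [IsCardPresentable, isCardFiltered_iff]
  exact ⟨fun h => ⟨fun J _ _ => (h J ‹_›).some⟩,
    fun h J _ hJ => ⟨h.preservesColimitOfShape J⟩⟩

lemma preservesCardFiltered_iff {C : Type u} [Category.{v} C] {D : Type u₂} [Category.{v} D]
    (F : C ⥤ D) : PreservesCardFiltered F κ ↔ F.IsCardinalAccessible κ := by
  simp only [PreservesCardFiltered, isCardFiltered_iff]
  exact ⟨fun h => ⟨fun J _ _ => (h J ‹_›).some⟩,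
    fun h J _ hJ => ⟨h.preservesColimitOfShape J⟩⟩

lemma IsCardAccessible.hasCardinalFilteredColimits {C : Type u} [Category.{v} C]
    (h : IsCardAccessible C κ) : HasCardinalFilteredColimits C κ where
  hasColimitsOfShape J _ hJ := h.1 J ((isCardFiltered_iff J).2 hJ)

end

namespace CategoryTheory.pi

variable {I : Type v} {C : I → Type u} [∀ i, Category.{v} (C i)]

instance preservesColimit_eval {J : Type v} [SmallCategory J] (F : J ⥤ ∀ i, C i)
    [∀ i, HasColimit (F ⋙ Pi.eval C i)] (i : I) : PreservesColimit F (Pi.eval C i) :=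
  preservesColimit_of_preserves_colimit_cocone
    (coconeOfCoconeEvalIsColimit fun _ => colimit.isColimit _) (colimit.isColimit _)

def isColimitWhiskerEval {J : I → Type v} [∀ i, SmallCategory (J i)] [∀ i, IsFiltered (J i)]
    {F : ∀ i, J i ⥤ C i} {c : ∀ i, Cocone (F i)} (hc : ∀ i, IsColimit (c i)) :
    IsColimit (coconeOfCoconeCompEval (F := Functor.pi F) fun i => (c i).whisker (Pi.eval J i)) :=
  coconeOfCoconeEvalIsColimit fun i =>
    (Functor.Final.isColimitWhiskerEquiv (Pi.eval J i) (c i)).symm (hc i)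

def coyonedaFan (X : ∀ i, C i) : Fan fun i => Pi.eval C i ⋙ coyoneda.obj (op (X i)) :=
  Fan.mk (coyoneda.obj (op X)) fun i => { app _ := ↾fun f => f i }

def isLimitCoyonedaFan (X : ∀ i, C i) : IsLimit (coyonedaFan X) :=
  evaluationJointlyReflectsLimits _ fun Y =>
    { lift s := ↾fun x i => s.π.app ⟨i⟩ x
      fac _ _ := rfl
      uniq s m hm := by
        ext x
        funext i
        exact ConcreteCategory.congr_hom (hm ⟨i⟩) x }

variable {κ : Cardinal.{v}} [Fact κ.IsRegular]

instance [∀ i, HasCardinalFilteredColimits (C i) κ] :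
    HasCardinalFilteredColimits (∀ i, C i) κ where
  hasColimitsOfShape J _ _ := by
    have := fun i => HasCardinalFilteredColimits.hasColimitsOfShape (C i) κ J
    exact ⟨fun _ => hasColimit_of_hasColimit_comp_eval⟩

instance isCardinalAccessible_eval [∀ i, HasCardinalFilteredColimits (C i) κ] (i : I) :
    (Pi.eval C i).IsCardinalAccessible κ where
  preservesColimitOfShape J _ _ := by
    have := fun i => HasCardinalFilteredColimits.hasColimitsOfShape (C i) κ J
    exact ⟨inferInstance⟩

lemma isCardinalPresentable_of_apply (hI : HasCardinalLT I κ)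
    [∀ i, (Pi.eval C i).IsCardinalAccessible κ] (X : ∀ i, C i)
    [∀ i, IsCardinalPresentable (X i) κ] : IsCardinalPresentable X κ := by
  have (k : Discrete I) : Functor.IsCardinalAccessible
      ((Discrete.functor fun i => Pi.eval C i ⋙ coyoneda.obj (op (X i))).obj k) κ := by
    dsimp; infer_instance
  exact Functor.isCardinalAccessible_of_isLimit _ (isLimitCoyonedaFan X) κ (by simpa using hI)

lemma isCardinalPresentable_apply_none {ι : Type v} {C : Option ι → Type u}
    [∀ o, Category.{v} (C o)] (X : ∀ o, C o) [IsCardinalPresentable X κ] :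
    IsCardinalPresentable (X none) κ where
  preservesColimitOfShape J _ _ := ⟨fun {F} => ⟨fun {c} hc => ⟨by
    have := isFiltered_of_isCardinalFiltered J κ
    have := IsFiltered.isConnected J
    let F' : J ⥤ ∀ o, C o := Functor.pi' fun
      | none => F
      | some p => (Functor.const J).obj (X (some p))
    let c' : Cocone F' := coconeOfCoconeCompEval fun
      | none => c
      | some p => constCocone J (X (some p))
    have hc' : IsColimit c' := coconeOfCoconeEvalIsColimit fun
      | none => hc
      | some p => isColimitConstCocone J (X (some p))
    let extend {Y : ∀ o, C o} (hY : ∀ p, Y (some p) = X (some p)) (f : X none ⟶ Y none) :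
        X ⟶ Y := fun
      | none => f
      | some p => eqToHom (hY p).symm
    refine Types.FilteredColimit.isColimitOf' _ _ (fun f ↦ ?_) (fun j f₁ f₂ hf ↦ ?_)
    · obtain ⟨j, g, hg⟩ :=
        IsCardinalPresentable.exists_hom_of_isColimit κ hc' (extend (fun _ => rfl) f)
      exact ⟨j, g none, (congr_fun hg none).symm⟩
    · obtain ⟨k, u, hk⟩ := IsCardinalPresentable.exists_eq_of_isColimit' κ hc'
        (extend (Y := F'.obj j) (fun _ => rfl) f₁) (extend (fun _ => rfl) f₂) (by
          funext o
          cases o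
          · exact hf
          · rfl)
      exact ⟨k, u, congr_fun hk none⟩⟩⟩⟩

lemma isCardinalPresentable_apply (X : ∀ i, C i) [IsCardinalPresentable X κ] (i : I) :
    IsCardinalPresentable (X i) κ := by
  classical
  let e := (Pi.equivalenceOfEquiv C (Equiv.optionSubtypeNe i)).symm
  have : IsCardinalPresentable (e.functor.obj X) κ := isCardinalPresentable_of_equivalence X κ e
  exact isCardinalPresentable_apply_none (e.functor.obj X)

end CategoryTheory.pi

theorem isCardAccessible_pi {κ : Cardinal.{v}} [Fact κ.IsRegular] {I : Type v}
    (hI : HasCardinalLT I κ) {C : I → Type u} [∀ i, Category.{v} (C i)]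
    (h : ∀ i, IsCardAccessible (C i) κ) : IsCardAccessible (∀ i, C i) κ := by
  choose S hS_small hS_pres hS_gen using fun i => (h i).2
  have := fun i => (h i).hasCardinalFilteredColimits
  refine ⟨fun J _ hJ => ?_, Set.univ.pi S, ?_, fun X hX => ?_, fun X => ?_⟩
  · have := (isCardFiltered_iff J).1 hJ
    exact HasCardinalFilteredColimits.hasColimitsOfShape _ κ J
  · exact small_of_injective (Equiv.Set.univPi S).injective
  · have := fun i => (isCardPresentable_iff _).1 (hS_pres i _ (hX i (Set.mem_univ i)))
    exact (isCardPresentable_iff X).2 (pi.isCardinalPresentable_of_apply hI X)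
  · choose J _ F c hJ hF hc e using fun i => hS_gen i (X i)
    have := fun i => (isCardFiltered_iff (J i)).1 (hJ i)
    have := fun i => isFiltered_of_isCardinalFiltered (J i) κ
    exact ⟨∀ i, J i, inferInstance, Functor.pi F, _, (isCardFiltered_iff _).2 inferInstance,
      fun j i _ => hF i (j i), ⟨pi.isColimitWhiskerEval fun i => (hc i).some⟩,
      ⟨Pi.isoMk fun i => (e i).some⟩⟩

/-- A `κ`-small product of `κ`-accessible categories is `κ`-accessible, with strongly
`κ`-accessible projections. -/
theorem stmt6 (κ : Cardinal.{v}) (hκ : κ.IsRegular) {I : Type v} (hI : Cardinal.mk I < κ)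
    (C : I → Type u) [∀ i, Category.{v} (C i)] (h : ∀ i, IsCardAccessible (C i) κ) :
    IsCardAccessible (∀ i, C i) κ ∧ ∀ i, StronglyCardAccessible (Pi.eval C i) κ := by
  have : Fact κ.IsRegular := ⟨hκ⟩
  have := fun i => (h i).hasCardinalFilteredColimits
  have hpi := isCardAccessible_pi ((hasCardinalLT_iff_cardinal_mk_lt I κ).2 hI) h
  refine ⟨hpi, fun i =>
    ⟨hpi, h i, (preservesCardFiltered_iff _).2 inferInstance, fun X hX => ?_⟩⟩
  rw [isCardPresentable_iff] at hX ⊢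
  exact pi.isCardinalPresentable_apply X i

end
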